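/- arXiv:2208.09742 — 3 statements merged into one kernel-verified Lean document; each statement's English description precedes it below -/
import Mathlib

section
/- Let j : ℝ² → ℝ² (with coordinates (t,z)) be a continuously differentiable vector field with ∂_t j⁰ + ∂_z j^z = 0, satisfying j⁰ ≥ |j^z| everywhere, and suppose j⁰(t,·) is integrable on ℝ for each t with j decaying to zero as z → ±∞. Then for all t ≥ 0: ∫_{t}^{∞} j⁰(t,z) dz ≤ ∫_{0}^{∞} j⁰(0,z) dz. -/
/-!
For `R ≥ 2t`, let `H(s) = ∫_{s}^{R-s} ρ(s,z) dz` be the mass between the outgoing null ray `z = s`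
and the incoming null ray `z = R - s`. Rescaling the slice to `[0,1]` and differentiating under
the integral, conservation turns `H'(s)` into boundary terms:
`H'(s) = -(ρ + J)(s, R - s) - (ρ - J)(s, s)`, the fluxes through the two null rays, which are
nonpositive by causality `|J| ≤ ρ`. Hence `H(t) ≤ H(0) ≤ ∫_{0}^{∞} ρ(0,z) dz`, and `R → ∞` gives
the inequality.
-/

open MeasureTheory Filter Set

theorem hasDerivAt_intervalIntegral_of_continuous_deriv {E : Type*} [NormedAddCommGroup E]
    [NormedSpace ℝ E] {F F' : ℝ → ℝ → E} (hF : Continuous (Function.uncurry F))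
    (hF' : Continuous (Function.uncurry F'))
    (hderiv : ∀ s u, HasDerivAt (F · u) (F' s u) s) (a b s₀ : ℝ) :
    HasDerivAt (fun s => ∫ u in a..b, F s u) (∫ u in a..b, F' s₀ u) s₀ := by
  obtain ⟨C, hC⟩ := ((isCompact_closedBall s₀ 1).prod (isCompact_uIcc (a := a) (b := b))
    |>.exists_bound_of_continuousOn hF'.continuousOn)
  refine (intervalIntegral.hasDerivAt_integral_of_dominated_loc_of_deriv_le (bound := fun _ => C)
    (Metric.closedBall_mem_nhds s₀ one_pos)
    (.of_forall fun s => (hF.comp (.prodMk_right s)).aestronglyMeasurable)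
    ((hF.comp (.prodMk_right s₀)).intervalIntegrable a b)
    (hF'.comp (.prodMk_right s₀)).aestronglyMeasurable
    (.of_forall fun u hu s hs => hC (s, u) ⟨hs, uIoc_subset_uIcc hu⟩)
    intervalIntegrable_const
    (.of_forall fun u _ s _ => hderiv s u)).2

theorem ContinuousLinearMap.apply_prod_eq_smul_add_smul {𝕜 M : Type*} [Semiring 𝕜]
    [TopologicalSpace 𝕜] [AddCommMonoid M] [TopologicalSpace M] [Module 𝕜 M]
    (L : 𝕜 × 𝕜 →L[𝕜] M) (a b : 𝕜) : L (a, b) = a • L (1, 0) + b • L (0, 1) := by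
  have h : ((a, b) : 𝕜 × 𝕜) = a • ((1, 0) : 𝕜 × 𝕜) + b • (0, 1) := by simp
  rw [h, map_add, map_smul, map_smul]

/-- For `s ≤ R / 2`, `u ∈ [0,1]` parametrizes the time-`s` slice between the null rays
`z = s` and `z = R - s`. -/
def trapezoidChart (R s u : ℝ) : ℝ × ℝ := (s, s + (R - 2 * s) * u)

theorem continuous_trapezoidChart (R : ℝ) : Continuous (Function.uncurry (trapezoidChart R)) := by
  unfold trapezoidChart; fun_prop

theorem hasDerivAt_trapezoidChart_time (R u s : ℝ) :
    HasDerivAt (trapezoidChart R · u) (1, 1 - 2 * u) s := by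
  refine (hasDerivAt_id s).prodMk ?_
  convert (hasDerivAt_id' s).fun_add (((hasDerivAt_id' s).const_mul 2).const_sub R |>.mul_const u)
    using 1
  ring

theorem hasDerivAt_trapezoidChart_space (R s u : ℝ) :
    HasDerivAt (trapezoidChart R s) (0, R - 2 * s) u := by
  refine (hasDerivAt_const u s).prodMk ?_
  simpa using ((hasDerivAt_id u).const_mul (R - 2 * s)).const_add s

theorem integral_eq_integral_trapezoidChart (ρ : ℝ × ℝ → ℝ) (R s : ℝ) :
    ∫ z in s..R - s, ρ (s, z) = ∫ u in 0..1, (R - 2 * s) * ρ (trapezoidChart R s u) := by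
  simp only [trapezoidChart]
  rw [intervalIntegral.integral_const_mul, ← smul_eq_mul,
    intervalIntegral.smul_integral_comp_add_mul (fun z => ρ (s, z))]
  ring_nf

section NullTrapezoid

variable {ρ J : ℝ × ℝ → ℝ}

theorem hasDerivAt_integral_between_null_rays (hρ : ContDiff ℝ 1 ρ) (hJ : ContDiff ℝ 1 J)
    (hcons : ∀ p, fderiv ℝ ρ p (1, 0) + fderiv ℝ J p (0, 1) = 0) (R s : ℝ) :
    HasDerivAt (fun s => ∫ z in s..R - s, ρ (s, z))
      (-(ρ (s, R - s) + J (s, R - s)) - (ρ (s, s) - J (s, s))) s := by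
  have hρd : ∀ p, HasFDerivAt ρ (fderiv ℝ ρ p) p :=
    fun p => (hρ.differentiable one_ne_zero p).hasFDerivAt
  have hJd : ∀ p, HasFDerivAt J (fderiv ℝ J p) p :=
    fun p => (hJ.differentiable one_ne_zero p).hasFDerivAt
  set Φ' : ℝ → ℝ → ℝ := fun s u => -2 * ρ (trapezoidChart R s u) +
    (R - 2 * s) * fderiv ℝ ρ (trapezoidChart R s u) (1, 1 - 2 * u)
  have hΦ'_cont : Continuous (Function.uncurry Φ') := by
    have hP := continuous_trapezoidChart R
    have hDρ := (hρ.continuous_fderiv one_ne_zero).comp hP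
    simp only [Φ', Function.uncurry_def]
    fun_prop
  have hΦ : ∀ s u, HasDerivAt (fun s => (R - 2 * s) * ρ (trapezoidChart R s u)) (Φ' s u) s :=
    fun s u => by
    refine ((((hasDerivAt_id' s).const_mul 2).const_sub R).fun_mul
      ((hρd _).comp_hasDerivAt s (hasDerivAt_trapezoidChart_time R u s))).congr_deriv ?_
    simp only [Φ', Function.comp_apply]
    ring
  -- the key identity: by conservation, `Φ'` is also a `u`-derivative
  have hψ : ∀ s u, HasDerivAt
      (fun u => (1 - 2 * u) * ρ (trapezoidChart R s u) - J (trapezoidChart R s u)) (Φ' s u) u :=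
    fun s u => by
    refine (((((hasDerivAt_id' u).const_mul 2).const_sub 1).fun_mul
      ((hρd _).comp_hasDerivAt u (hasDerivAt_trapezoidChart_space R s u))).fun_sub
      ((hJd _).comp_hasDerivAt u (hasDerivAt_trapezoidChart_space R s u))).congr_deriv ?_
    simp only [Φ', Function.comp_apply, smul_eq_mul,
      ContinuousLinearMap.apply_prod_eq_smul_add_smul _ 0 (R - 2 * s),
      ContinuousLinearMap.apply_prod_eq_smul_add_smul _ 1 (1 - 2 * u)]
    linear_combination -(R - 2 * s) * hcons (trapezoidChart R s u)
  simp only [integral_eq_integral_trapezoidChart ρ R]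
  refine (hasDerivAt_intervalIntegral_of_continuous_deriv ?_ hΦ'_cont hΦ 0 1 s).congr_deriv ?_
  · exact (continuous_const.sub (continuous_const.mul continuous_fst)).mul
      (hρ.continuous.comp (continuous_trapezoidChart R))
  · rw [intervalIntegral.integral_eq_sub_of_hasDerivAt (fun u _ => hψ s u)
      ((hΦ'_cont.comp (.prodMk_right s)).intervalIntegrable 0 1)]
    simp only [trapezoidChart]
    ring_nf

theorem antitone_integral_between_null_rays (hρ : ContDiff ℝ 1 ρ) (hJ : ContDiff ℝ 1 J)
    (hcons : ∀ p, fderiv ℝ ρ p (1, 0) + fderiv ℝ J p (0, 1) = 0)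
    (hcausal : ∀ p, |J p| ≤ ρ p) (R : ℝ) :
    Antitone fun s => ∫ z in s..R - s, ρ (s, z) := by
  refine antitone_of_hasDerivAt_nonpos (hasDerivAt_integral_between_null_rays hρ hJ hcons R)
    fun s => ?_
  have hout := abs_le.mp (hcausal (s, R - s))
  have hin := abs_le.mp (hcausal (s, s))
  simp only [Pi.zero_apply]
  linarith [hout.1, hin.2]

end NullTrapezoid

theorem probability_flow_inequality_general
    (j : ℝ × ℝ → ℝ × ℝ) (hj : ContDiff ℝ 1 j)
    (hcons : ∀ p : ℝ × ℝ,
      fderiv ℝ (fun q => (j q).1) p (1, 0) + fderiv ℝ (fun q => (j q).2) p (0, 1) = 0)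
    (hcausal : ∀ p : ℝ × ℝ, |(j p).2| ≤ (j p).1)
    (hint : ∀ t : ℝ, Integrable (fun z => (j (t, z)).1)) :
    ∀ t : ℝ, 0 ≤ t →
      (∫ z in Set.Ioi t, (j (t, z)).1) ≤ ∫ z in Set.Ioi (0 : ℝ), (j (0, z)).1 := by
  intro t ht
  have hρ_nonneg : ∀ p, 0 ≤ (j p).1 := fun p => (abs_nonneg _).trans (hcausal p)
  refine le_of_tendsto (intervalIntegral_tendsto_integral_Ioi (b := fun R => R - t) t
    (hint t).integrableOn (tendsto_atTop_add_const_right _ _ tendsto_id)) ?_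
  filter_upwards [eventually_ge_atTop (2 * t)] with R hR
  calc ∫ z in t..R - t, (j (t, z)).1
      ≤ ∫ z in 0..R - 0, (j (0, z)).1 :=
        antitone_integral_between_null_rays hj.fst hj.snd hcons hcausal R ht
    _ = ∫ z in Ioc 0 R, (j (0, z)).1 := by
        rw [sub_zero, intervalIntegral.integral_of_le (by linarith)]
    _ ≤ ∫ z in Ioi 0, (j (0, z)).1 :=
        setIntegral_mono_set (hint 0).integrableOn (.of_forall fun z => hρ_nonneg _)
          Ioc_subset_Ioi_self.eventuallyLE

/-- Probability-flow inequality: for a conserved, causal (|j^z| ≤ j⁰) current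
decaying at spatial infinity, the probability to the right of the light ray
z = t at time t never exceeds the initial probability to the right of z = 0.
Coordinates: p = (t, z); (j p).1 = j⁰, (j p).2 = j^z. -/
theorem probability_flow_inequality
    (j : ℝ × ℝ → ℝ × ℝ) (hj : ContDiff ℝ 1 j)
    (hcons : ∀ p : ℝ × ℝ,
      fderiv ℝ (fun q => (j q).1) p (1, 0) + fderiv ℝ (fun q => (j q).2) p (0, 1) = 0)
    (hcausal : ∀ p : ℝ × ℝ, |(j p).2| ≤ (j p).1)
    (hint : ∀ t : ℝ, Integrable (fun z => (j (t, z)).1))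
    (hdecay : ∀ t : ℝ, Tendsto (fun z => j (t, z)) atTop (nhds 0) ∧
      Tendsto (fun z => j (t, z)) atBot (nhds 0)) :
    ∀ t : ℝ, 0 ≤ t →
      (∫ z in Set.Ioi t, (j (t, z)).1) ≤ ∫ z in Set.Ioi (0 : ℝ), (j (0, z)).1 :=
  probability_flow_inequality_general j hj hcons hcausal hint
end

section
/- Under the hypotheses of the probability-flow inequality (conserved current j with j⁰ ≥ |j^z|, total probability ∫_ℝ j⁰(t,z) dz = 1 for all t, suitable decay at infinity), if ∫_{−∞}^{0} j⁰(0,z)dz = P (the electron is initially to the left of z = 0 with probability P), then for every 0 ≤ t < L: ∫_{L}^{∞} j⁰(t,z) dz ≤ 1 − P. -/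
open MeasureTheory Filter Set
open scoped ENNReal

/-!
Write `f = j⁰` and `g = j^z` as functions of `(t, z)`. Conservation says that the derivative
of `f` along the light ray direction `(1, 1)` is `∂_z (f - g)`, so the probability
`∫_t^{t+R} f(t, z) dz` in a window moving at the speed of light changes at rate
`(f - g)(t, t + R) - (f - g)(t, t)`. Causality makes `f - g ≥ 0` at the trailing edge and
`f - g ≤ 2f` at the leading edge. By Tonelli the leading-edge term `∫_s^t f(x, x + R) dx` has
integral over `R` at most `(t - s)` times the total probability, so it is arbitrarily small for
arbitrarily large `R`; letting `R → ∞` along such `R` shows that `P_t(z > t)` is antitone in `t`.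
-/

theorem intervalIntegral_comp_add_right_le_integral_Ioi {φ : ℝ → ℝ} {x R : ℝ}
    (hφ : IntegrableOn φ (Ioi x)) (hφ0 : ∀ z, 0 ≤ φ z) (hR : 0 ≤ R) :
    ∫ w in 0..R, φ (w + x) ≤ ∫ z in Ioi x, φ z := by
  rw [intervalIntegral.integral_comp_add_right, zero_add,
    intervalIntegral.integral_of_le (by linarith)]
  exact setIntegral_mono_set hφ (.of_forall fun z => hφ0 z) Ioc_subset_Ioi_self.eventuallyLE

theorem tendsto_intervalIntegral_comp_add_right_integral_Ioi {φ : ℝ → ℝ} {x : ℝ}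
    (hφ : IntegrableOn φ (Ioi x)) :
    Tendsto (fun R => ∫ w in 0..R, φ (w + x)) atTop (nhds (∫ z in Ioi x, φ z)) := by
  simp_rw [intervalIntegral.integral_comp_add_right, zero_add]
  exact intervalIntegral_tendsto_integral_Ioi x hφ (tendsto_atTop_add_const_right _ x tendsto_id)

theorem frequently_atTop_lt_of_lintegral_ne_top {H : ℝ → ℝ≥0∞} (hH : ∫⁻ R, H R ≠ ∞)
    {ε : ℝ≥0∞} (hε : ε ≠ 0) : ∃ᶠ R in atTop, H R < ε := by
  intro hge
  obtain ⟨M, hM⟩ := eventually_atTop.1 (hge.mono fun _ => not_lt.1)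
  refine hH (top_le_iff.1 ?_)
  calc ∞ = ∫⁻ _ in Ioi M, ε := by rw [setLIntegral_const, Real.volume_Ioi, ENNReal.mul_top hε]
    _ ≤ ∫⁻ R in Ioi M, H R :=
        lintegral_mono_ae
          ((ae_restrict_iff' measurableSet_Ioi).2 (.of_forall fun R hR => hM R hR.le))
    _ ≤ ∫⁻ R, H R := setLIntegral_le_lintegral _ _

theorem frequently_atTop_intervalIntegral_diagonal_lt {h : ℝ × ℝ → ℝ} (hc : Continuous h)
    (h0 : ∀ p, 0 ≤ h p) (hint : ∀ x, Integrable fun z => h (x, z)) {M : ℝ}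
    (hM : ∀ x, ∫ z, h (x, z) ≤ M) {s t : ℝ} (hst : s ≤ t) {ε : ℝ} (hε : 0 < ε) :
    ∃ᶠ R in atTop, ∫ x in s..t, h (x, R + x) < ε := by
  let H : ℝ → ℝ → ℝ≥0∞ := fun R x => ENNReal.ofReal (h (x, R + x))
  have hHm : Measurable (Function.uncurry H) := by fun_prop
  have hslice : ∀ x, ∫⁻ R, H R x ≤ ENNReal.ofReal M := fun x => by
    rw [lintegral_add_right_eq_self (fun z => ENNReal.ofReal (h (x, z))) x,
      ← ofReal_integral_eq_lintegral_ofReal (hint x) (.of_forall fun z => h0 _)]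
    exact ENNReal.ofReal_le_ofReal (hM x)
  have htotal : ∫⁻ R, ∫⁻ x in Ioc s t, H R x ≠ ∞ := by
    rw [lintegral_lintegral_swap hHm.aemeasurable]
    refine ne_top_of_le_ne_top ?_ (lintegral_mono hslice)
    simp [ENNReal.mul_eq_top]
  refine (frequently_atTop_lt_of_lintegral_ne_top htotal (ENNReal.ofReal_pos.2 hε).ne').mono
    fun R hR => ?_
  have hcR : Continuous fun x => h (x, R + x) := by fun_prop
  rwa [← ofReal_integral_eq_lintegral_ofReal hcR.integrableOn_Ioc (.of_forall fun x => h0 _),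
    ENNReal.ofReal_lt_ofReal_iff hε, ← intervalIntegral.integral_of_le hst] at hR

theorem hasDerivAt_intervalIntegral_comp_diagonal {f : ℝ × ℝ → ℝ} (hf : ContDiff ℝ 1 f)
    (R x₀ : ℝ) :
    HasDerivAt (fun x => ∫ w in 0..R, f (x, w + x))
      (∫ w in 0..R, fderiv ℝ f (x₀, w + x₀) (1, 1)) x₀ := by
  have hdf : Continuous fun p : ℝ × ℝ => fderiv ℝ f (p.1, p.2 + p.1) (1, 1) :=
    ((hf.continuous_fderiv one_ne_zero).comp (by fun_prop)).clm_apply continuous_const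
  obtain ⟨C, hC⟩ := ((isCompact_closedBall x₀ 1).prod (isCompact_uIcc (a := 0) (b := R))
    ).exists_bound_of_continuousOn hdf.continuousOn
  have hderiv : ∀ w x, HasDerivAt (fun x => f (x, w + x)) (fderiv ℝ f (x, w + x) (1, 1)) x :=
    fun w x => ((hf.differentiable one_ne_zero) _).hasFDerivAt.comp_hasDerivAt x
      ((hasDerivAt_id x).prodMk ((hasDerivAt_id x).const_add w))
  exact (intervalIntegral.hasDerivAt_integral_of_dominated_loc_of_deriv_le
    (bound := fun _ => C) (Metric.ball_mem_nhds x₀ one_pos)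
    (.of_forall fun x => (hf.continuous.comp (by fun_prop)).aestronglyMeasurable)
    ((hf.continuous.comp (by fun_prop)).intervalIntegrable _ _)
    ((hdf.comp (by fun_prop)).aestronglyMeasurable)
    (.of_forall fun w hw x hx =>
      hC (x, w) ⟨Metric.ball_subset_closedBall hx, uIoc_subset_uIcc hw⟩)
    intervalIntegrable_const (.of_forall fun w _ x _ => hderiv w x)).2

section Current

variable {f g : ℝ × ℝ → ℝ}

theorem hasDerivAt_intervalIntegral_lightRay (hf : ContDiff ℝ 1 f) (hg : ContDiff ℝ 1 g)
    (hcons : ∀ p, fderiv ℝ f p (1, 0) + fderiv ℝ g p (0, 1) = 0) (R x₀ : ℝ) :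
    HasDerivAt (fun x => ∫ w in 0..R, f (x, w + x))
      ((f (x₀, R + x₀) - g (x₀, R + x₀)) - (f (x₀, x₀) - g (x₀, x₀))) x₀ := by
  have hlight : ∀ p, fderiv ℝ f p (1, 1) = fderiv ℝ f p (0, 1) - fderiv ℝ g p (0, 1) := fun p => by
    rw [show ((1 : ℝ), (1 : ℝ)) = (1, 0) + (0, 1) by simp, map_add]
    linarith [hcons p]
  have hvert : ∀ {φ : ℝ × ℝ → ℝ}, ContDiff ℝ 1 φ → ∀ w,
      HasDerivAt (fun w => φ (x₀, w + x₀)) (fderiv ℝ φ (x₀, w + x₀) (0, 1)) w :=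
    fun hφ w => ((hφ.differentiable one_ne_zero) _).hasFDerivAt.comp_hasDerivAt w
      ((hasDerivAt_const w x₀).prodMk ((hasDerivAt_id w).add_const x₀))
  have hftc : ∫ w in 0..R, fderiv ℝ f (x₀, w + x₀) (1, 1) =
      (f (x₀, R + x₀) - g (x₀, R + x₀)) - (f (x₀, x₀) - g (x₀, x₀)) := by
    simp_rw [hlight]
    rw [intervalIntegral.integral_eq_sub_of_hasDerivAt (fun w _ => (hvert hf w).sub (hvert hg w))]
    · simp
    · exact (((hf.continuous_fderiv one_ne_zero).clm_apply continuous_const).sub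
        ((hg.continuous_fderiv one_ne_zero).clm_apply continuous_const)).comp
          (by fun_prop : Continuous fun w : ℝ => (x₀, w + x₀)) |>.intervalIntegrable _ _
  exact hftc ▸ hasDerivAt_intervalIntegral_comp_diagonal hf R x₀

theorem intervalIntegral_lightRay_le (hf : ContDiff ℝ 1 f) (hg : ContDiff ℝ 1 g)
    (hcons : ∀ p, fderiv ℝ f p (1, 0) + fderiv ℝ g p (0, 1) = 0)
    (hcausal : ∀ p, |g p| ≤ f p) (R : ℝ) {s t : ℝ} (hst : s ≤ t) :
    ∫ w in 0..R, f (t, w + t) ≤ (∫ w in 0..R, f (s, w + s)) + 2 * ∫ x in s..t, f (x, R + x) := by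
  have hψ : Continuous fun x => (f (x, R + x) - g (x, R + x)) - (f (x, x) - g (x, x)) := by
    have := hf.continuous; have := hg.continuous; fun_prop
  have hfR : Continuous fun x => 2 * f (x, R + x) := by have := hf.continuous; fun_prop
  have hflux : ∀ x, (f (x, R + x) - g (x, R + x)) - (f (x, x) - g (x, x)) ≤ 2 * f (x, R + x) :=
    fun x => by linarith [(abs_le.1 (hcausal (x, R + x))).1, (abs_le.1 (hcausal (x, x))).2]
  have hint : ∫ x in s..t, ((f (x, R + x) - g (x, R + x)) - (f (x, x) - g (x, x))) ≤
      ∫ x in s..t, 2 * f (x, R + x) :=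
    intervalIntegral.integral_mono_on hst (hψ.intervalIntegrable _ _) (hfR.intervalIntegrable _ _)
      fun x _ => hflux x
  rw [intervalIntegral.integral_eq_sub_of_hasDerivAt
    (fun x _ => hasDerivAt_intervalIntegral_lightRay hf hg hcons R x) (hψ.intervalIntegrable _ _),
    intervalIntegral.integral_const_mul] at hint
  linarith

theorem antitone_integral_Ioi_lightRay (hf : ContDiff ℝ 1 f) (hg : ContDiff ℝ 1 g)
    (hcons : ∀ p, fderiv ℝ f p (1, 0) + fderiv ℝ g p (0, 1) = 0)
    (hcausal : ∀ p, |g p| ≤ f p) (hint : ∀ t, Integrable fun z => f (t, z)) {M : ℝ}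
    (hM : ∀ t, ∫ z, f (t, z) ≤ M) :
    Antitone fun t => ∫ z in Ioi t, f (t, z) := by
  intro s t hst
  dsimp only
  have hf0 : ∀ p, 0 ≤ f p := fun p => (abs_nonneg _).trans (hcausal p)
  refine le_of_forall_pos_le_add fun ε hε => ?_
  have hwindow : ∀ᶠ R in atTop, (∫ z in Ioi t, f (t, z)) - ε / 3 < ∫ w in 0..R, f (t, w + t) :=
    (tendsto_intervalIntegral_comp_add_right_integral_Ioi (hint t).integrableOn).eventually
      (eventually_gt_nhds (by linarith))
  obtain ⟨R, hflux, hclose, hR⟩ :=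
    ((frequently_atTop_intervalIntegral_diagonal_lt hf.continuous hf0 hint hM hst
      (by linarith : 0 < ε / 3)).and_eventually (hwindow.and (eventually_ge_atTop 0))).exists
  linarith [intervalIntegral_lightRay_le hf hg hcons hcausal R hst,
    intervalIntegral_comp_add_right_le_integral_Ioi (x := s) (hint s).integrableOn
      (fun z => hf0 (s, z)) hR]

end Current

theorem luminal_bound_on_tunnelling_general
    (j : ℝ × ℝ → ℝ × ℝ) (hj : ContDiff ℝ 1 j)
    (hcons : ∀ p : ℝ × ℝ,
      fderiv ℝ (fun q => (j q).1) p (1, 0) + fderiv ℝ (fun q => (j q).2) p (0, 1) = 0)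
    (hcausal : ∀ p : ℝ × ℝ, |(j p).2| ≤ (j p).1)
    (hint : ∀ t : ℝ, Integrable (fun z => (j (t, z)).1))
    (hnorm : ∀ t : ℝ, (∫ z : ℝ, (j (t, z)).1) = 1)
    (L P : ℝ)
    (hinit : (∫ z in Set.Iio (0 : ℝ), (j (0, z)).1) = P) :
    ∀ t : ℝ, 0 ≤ t → t < L →
      (∫ z in Set.Ioi L, (j (t, z)).1) ≤ 1 - P := by
  intro t ht htL
  have hleaked : ∫ z in Ioi 0, (j (0, z)).1 = 1 - P := by
    rw [← hnorm 0, ← hinit, ← integral_Iic_eq_integral_Iio,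
      ← intervalIntegral.integral_Iic_add_Ioi (hint 0).integrableOn (hint 0).integrableOn]
    ring
  calc ∫ z in Ioi L, (j (t, z)).1 ≤ ∫ z in Ioi t, (j (t, z)).1 :=
        setIntegral_mono_set (hint t).integrableOn
          (.of_forall fun z => (abs_nonneg _).trans (hcausal _))
          (Ioi_subset_Ioi htL.le).eventuallyLE
    _ ≤ ∫ z in Ioi 0, (j (0, z)).1 :=
        antitone_integral_Ioi_lightRay (contDiff_fst.comp hj) (contDiff_snd.comp hj) hcons hcausal
          hint (fun t => (hnorm t).le) ht
    _ = 1 - P := hleaked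

/-- Luminal bound on the speed of tunnelling: if the electron is initially to the
left of z = 0 with probability P, then for every time 0 ≤ t < L the probability to
the right of the barrier edge z = L cannot exceed the initially leaked probability
1 − P. Coordinates: p = (t, z); (j p).1 = j⁰, (j p).2 = j^z. -/
theorem luminal_bound_on_tunnelling
    (j : ℝ × ℝ → ℝ × ℝ) (hj : ContDiff ℝ 1 j)
    (hcons : ∀ p : ℝ × ℝ,
      fderiv ℝ (fun q => (j q).1) p (1, 0) + fderiv ℝ (fun q => (j q).2) p (0, 1) = 0)
    (hcausal : ∀ p : ℝ × ℝ, |(j p).2| ≤ (j p).1)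
    (hint : ∀ t : ℝ, Integrable (fun z => (j (t, z)).1))
    (hdecay : ∀ t : ℝ, Tendsto (fun z => j (t, z)) atTop (nhds 0) ∧
      Tendsto (fun z => j (t, z)) atBot (nhds 0))
    (hnorm : ∀ t : ℝ, (∫ z : ℝ, (j (t, z)).1) = 1)
    (L P : ℝ) (hL : 0 < L)
    (hinit : (∫ z in Set.Iio (0 : ℝ), (j (0, z)).1) = P) :
    ∀ t : ℝ, 0 ≤ t → t < L →
      (∫ z in Set.Ioi L, (j (t, z)).1) ≤ 1 - P :=
  luminal_bound_on_tunnelling_general j hj hcons hcausal hint hnorm L P hinit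
end

section
/- Let j : ℝ² → ℝ² be a continuously differentiable conserved current (∂_t j⁰ + ∂_z j^z = 0) with j⁰ ≥ |j^z|, integrable and decaying at spatial infinity. Then for any a ∈ ℝ, the function t ↦ ∫_{a+t}^{∞} j⁰(t,z) dz is non-increasing in t. -/
/-!
Cut the charge off at a leftward light ray `z = R - t`. By the conservation law, the charge
between the rays `z = a + t` and `z = R - t` changes at the rate `-(j⁰ - jᶻ)` at the left ray
plus `-(j⁰ + jᶻ)` at the right ray, and both fluxes are nonnegative by causality, so this
truncated charge is antitone in `t`. Integrability of `j⁰` lets `R → ∞`.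
-/

open MeasureTheory Filter Function Set

theorem intervalIntegral.hasDerivAt_integral_of_continuous_partial
    {E : Type*} [NormedAddCommGroup E] [NormedSpace ℝ E] [CompleteSpace E]
    {F F' : ℝ → ℝ → E} (hF : ∀ t, Continuous (F t)) (hF' : Continuous (uncurry F'))
    (hderiv : ∀ t s, HasDerivAt (F · s) (F' t s) t) (a b t₀ : ℝ) :
    HasDerivAt (fun t => ∫ s in a..b, F t s) (∫ s in a..b, F' t₀ s) t₀ := by
  obtain ⟨C, hC⟩ := ((isCompact_closedBall t₀ 1).prod isCompact_uIcc).exists_bound_of_continuousOn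
    hF'.continuousOn
  refine (intervalIntegral.hasDerivAt_integral_of_dominated_loc_of_deriv_le
    (Metric.ball_mem_nhds t₀ one_pos) (.of_forall fun t => (hF t).aestronglyMeasurable)
    ((hF t₀).intervalIntegrable a b) (hF'.comp (Continuous.prodMk_right t₀)).aestronglyMeasurable
    (.of_forall fun s hs t ht => hC (t, s) ⟨Metric.ball_subset_closedBall ht, uIoc_subset_uIcc hs⟩)
    (continuous_const.intervalIntegrable a b) (.of_forall fun s _ t _ => hderiv t s)).2

theorem intervalIntegral.hasDerivAt_integral_of_partial_eq
    {E : Type*} [NormedAddCommGroup E] [NormedSpace ℝ E] [CompleteSpace E]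
    {F G D : ℝ → ℝ → E} (hF : ∀ t, Continuous (F t)) (hD : Continuous (uncurry D))
    (hF_deriv : ∀ t s, HasDerivAt (F · s) (D t s) t)
    (hG_deriv : ∀ t s, HasDerivAt (G t) (D t s) s) (a b t₀ : ℝ) :
    HasDerivAt (fun t => ∫ s in a..b, F t s) (G t₀ b - G t₀ a) t₀ := by
  rw [← intervalIntegral.integral_eq_sub_of_hasDerivAt (fun s _ => hG_deriv t₀ s)
    ((hD.comp (Continuous.prodMk_right t₀)).intervalIntegrable a b)]
  exact hasDerivAt_integral_of_continuous_partial hF hD hF_deriv a b t₀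

theorem HasDerivAt.comp_prodMk_of_differentiableAt {f : ℝ × ℝ → ℝ} {x y : ℝ → ℝ} {x' y' t : ℝ}
    (hf : DifferentiableAt ℝ f (x t, y t)) (hx : HasDerivAt x x' t) (hy : HasDerivAt y y' t) :
    HasDerivAt (fun t => f (x t, y t))
      (x' * fderiv ℝ f (x t, y t) (1, 0) + y' * fderiv ℝ f (x t, y t) (0, 1)) t := by
  have hxy : ((x', y') : ℝ × ℝ) = x' • ((1 : ℝ), (0 : ℝ)) + y' • ((0 : ℝ), (1 : ℝ)) := by simp
  have h := hf.hasFDerivAt.comp_hasDerivAt t (hx.prodMk hy)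
  rwa [hxy, map_add, map_smul, map_smul, smul_eq_mul, smul_eq_mul] at h

theorem hasDerivAt_integral_between_light_rays {f g : ℝ × ℝ → ℝ} (hf : ContDiff ℝ 1 f)
    (hg : ContDiff ℝ 1 g) (hcons : ∀ p, fderiv ℝ f p (1, 0) + fderiv ℝ g p (0, 1) = 0)
    (a R t₀ : ℝ) :
    HasDerivAt (fun t => ∫ z in a + t..R - t, f (t, z))
      (-(f (t₀, a + t₀) - g (t₀, a + t₀)) - (f (t₀, R - t₀) + g (t₀, R - t₀))) t₀ := by
  have hfd : Differentiable ℝ f := hf.differentiable one_ne_zero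
  have hgd : Differentiable ℝ g := hg.differentiable one_ne_zero
  let L t := R - a - 2 * t
  let φ t s : ℝ × ℝ := (t, a + t + L t * s)
  have hrescale : (fun t => ∫ z in a + t..R - t, f (t, z))
      = fun t => ∫ s in (0 : ℝ)..1, L t * f (φ t s) := by
    funext t
    rw [intervalIntegral.integral_const_mul,
      intervalIntegral.mul_integral_comp_add_mul (f := fun z => f (t, z))]
    congr 1 <;> ring
  -- On the rescaled segment, conservation makes the `t`-derivative of the integrand an exact
  -- `s`-derivative.
  let D t s := -2 * f (φ t s) +
    L t * (fderiv ℝ f (φ t s) (1, 0) + (1 - 2 * s) * fderiv ℝ f (φ t s) (0, 1))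
  have hL : ∀ t, HasDerivAt L (-2) t := fun t =>
    (((hasDerivAt_id' t).const_mul 2).const_sub (R - a)).congr_deriv (by ring)
  have hF : ∀ t s, HasDerivAt (fun t => L t * f (φ t s)) (D t s) t := fun t s => by
    have hy : HasDerivAt (fun t => a + t + L t * s) (1 - 2 * s) t :=
      (((hasDerivAt_id' t).const_add a).add ((hL t).mul_const s)).congr_deriv (by ring)
    exact ((hL t).mul ((hasDerivAt_id' t).comp_prodMk_of_differentiableAt (hfd _) hy)).congr_deriv
      (by ring)
  have hG : ∀ t s, HasDerivAt (fun s => (1 - 2 * s) * f (φ t s) - g (φ t s)) (D t s) s :=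
      fun t s => by
    have hy : HasDerivAt (fun s => a + t + L t * s) (L t) s :=
      (((hasDerivAt_id' s).const_mul (L t)).const_add (a + t)).congr_deriv (by ring)
    have hweight : HasDerivAt (fun s : ℝ => 1 - 2 * s) (-2) s :=
      (((hasDerivAt_id' s).const_mul 2).const_sub 1).congr_deriv (by ring)
    refine ((hweight.mul ((hasDerivAt_const s t).comp_prodMk_of_differentiableAt (hfd _) hy)).sub
      ((hasDerivAt_const s t).comp_prodMk_of_differentiableAt (hgd _) hy)).congr_deriv ?_
    linear_combination -L t * hcons (φ t s)
  have hD : Continuous (uncurry D) := by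
    have := hf.continuous_fderiv one_ne_zero
    have := hf.continuous
    fun_prop
  rw [hrescale]
  refine (intervalIntegral.hasDerivAt_integral_of_partial_eq (fun t => by fun_prop) hD hF hG
    0 1 t₀).congr_deriv ?_
  have hφ₀ : φ t₀ 0 = (t₀, a + t₀) := by simp [φ]
  have hφ₁ : φ t₀ 1 = (t₀, R - t₀) := by simp only [φ, L]; ext <;> simp; ring
  rw [hφ₀, hφ₁]
  ring

theorem antitone_integral_between_light_rays {f g : ℝ × ℝ → ℝ} (hf : ContDiff ℝ 1 f)
    (hg : ContDiff ℝ 1 g) (hcons : ∀ p, fderiv ℝ f p (1, 0) + fderiv ℝ g p (0, 1) = 0)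
    (hcausal : ∀ p, |g p| ≤ f p) (a R : ℝ) :
    Antitone fun t => ∫ z in a + t..R - t, f (t, z) := by
  refine antitone_of_hasDerivAt_nonpos (hasDerivAt_integral_between_light_rays hf hg hcons a R)
    fun t => ?_
  dsimp only [Pi.zero_apply]
  have hleft := abs_le.mp (hcausal (t, a + t))
  have hright := abs_le.mp (hcausal (t, R - t))
  linarith [hleft.2, hright.1]

-- Coordinates: `p = (t, z)`, `(j p).1 = j⁰`, `(j p).2 = jᶻ`.
theorem probability_right_of_light_ray_antitone_general
    (j : ℝ × ℝ → ℝ × ℝ) (hj : ContDiff ℝ 1 j)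
    (hcons : ∀ p : ℝ × ℝ,
      fderiv ℝ (fun q => (j q).1) p (1, 0) + fderiv ℝ (fun q => (j q).2) p (0, 1) = 0)
    (hcausal : ∀ p : ℝ × ℝ, |(j p).2| ≤ (j p).1)
    (hint : ∀ t : ℝ, Integrable (fun z => (j (t, z)).1)) :
    ∀ a : ℝ, Antitone (fun t : ℝ => ∫ z in Set.Ioi (a + t), (j (t, z)).1) := by
  intro a t₁ t₂ ht
  have hlimit : ∀ t, Tendsto (fun R => ∫ z in a + t..R - t, (j (t, z)).1) atTop
      (nhds (∫ z in Set.Ioi (a + t), (j (t, z)).1)) := fun t =>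
    intervalIntegral_tendsto_integral_Ioi _ (hint t).integrableOn
      (tendsto_atTop_add_const_right _ _ tendsto_id)
  exact le_of_tendsto_of_tendsto (hlimit t₂) (hlimit t₁) (.of_forall fun R =>
    antitone_integral_between_light_rays (contDiff_fst.comp hj) (contDiff_snd.comp hj) hcons
      hcausal a R ht)

/-- Photons overtake electrons: for a conserved causal current, the probability to
the right of any rightward-moving light ray z = a + t is non-increasing in t.
Coordinates: p = (t, z); (j p).1 = j⁰, (j p).2 = j^z. -/
theorem probability_right_of_light_ray_antitone
    (j : ℝ × ℝ → ℝ × ℝ) (hj : ContDiff ℝ 1 j)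
    (hcons : ∀ p : ℝ × ℝ,
      fderiv ℝ (fun q => (j q).1) p (1, 0) + fderiv ℝ (fun q => (j q).2) p (0, 1) = 0)
    (hcausal : ∀ p : ℝ × ℝ, |(j p).2| ≤ (j p).1)
    (hint : ∀ t : ℝ, Integrable (fun z => (j (t, z)).1))
    (hdecay : ∀ t : ℝ, Tendsto (fun z => j (t, z)) atTop (nhds 0) ∧
      Tendsto (fun z => j (t, z)) atBot (nhds 0)) :
    ∀ a : ℝ, Antitone (fun t : ℝ => ∫ z in Set.Ioi (a + t), (j (t, z)).1) :=
  probability_right_of_light_ray_antitone_general j hj hcons hcausal hint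
end
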